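/- Soundness of the Ros^□ rule over (0,n)-accessible frames for n ≥ 2: if NRA_{0,n} ⊢ ψ then ψ is valid on every (0,n)-accessible N-frame. -/

import Mathlib

inductive Formula : Type
  | bot : Formula
  | var : ℕ → Formula
  | neg : Formula → Formula
  | or : Formula → Formula → Formula
  | box : Formula → Formula
  deriving DecidableEq

namespace Formula

def imp (φ ψ : Formula) : Formula := .or (.neg φ) ψ

def and (φ ψ : Formula) : Formula := .neg (.or (.neg φ) (.neg ψ))

/-- □^n φ -/
def boxn : ℕ → Formula → Formula
  | 0, φ => φ
  | k+1, φ => .box (boxn k φ)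

/-- the set of subformulas -/
def sub : Formula → Finset Formula
  | .bot => {.bot}
  | .var p => {.var p}
  | .neg φ => insert (.neg φ) φ.sub
  | .or φ ψ => insert (.or φ ψ) (φ.sub ∪ ψ.sub)
  | .box φ => insert (.box φ) φ.sub

/-- ∼ρ -/
def negg : Formula → Formula
  | .neg φ => φ
  | φ => .neg φ

end Formula

def NSub (ψ : Formula) : Finset Formula := ψ.sub ∪ ψ.sub.image Formula.negg

/-- boolean evaluation treating boxed formulas and variables as atoms -/
def evalP (v : Formula → Bool) : Formula → Bool
  | .bot => false
  | .var p => v (.var p)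
  | .neg φ => !(evalP v φ)
  | .or φ ψ => evalP v φ || evalP v ψ
  | .box φ => v (.box φ)

/-- propositional tautologies in the modal language -/
def Tautology (φ : Formula) : Prop := ∀ v, evalP v φ = true

/-- Provability in NA_{m,n} (ros = false) and NRA_{m,n} (ros = true):
    propositional tautologies, the scheme □^n φ → □^m φ, modus ponens,
    necessitation, and (if ros) the rule Ros^□ : ¬□φ / ¬□□φ. -/
inductive Prov (m n : ℕ) (ros : Bool) : Formula → Prop
  | taut {φ} : Tautology φ → Prov m n ros φ
  | axA (φ) : Prov m n ros ((Formula.boxn n φ).imp (Formula.boxn m φ))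
  | mp {φ ψ} : Prov m n ros (φ.imp ψ) → Prov m n ros φ → Prov m n ros ψ
  | nec {φ} : Prov m n ros φ → Prov m n ros (.box φ)
  | ros {φ} : ros = true → Prov m n ros (.neg (.box φ)) →
      Prov m n ros (.neg (.box (.box φ)))

/-- An N-frame on world set W: a binary relation R_φ for each formula φ. -/
abbrev NFrame (W : Type) := Formula → W → W → Prop

structure NModel (W : Type) where
  Rel : NFrame W
  V : W → ℕ → Prop

/-- satisfaction in an N-model -/
def Sat {W : Type} (M : NModel W) : W → Formula → Prop
  | _, .bot => False
  | w, .var p => M.V w p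
  | w, .neg φ => ¬ Sat M w φ
  | w, .or φ ψ => Sat M w φ ∨ Sat M w ψ
  | w, .box φ => ∀ w', M.Rel φ w w' → Sat M w' φ

/-- x R_φ^k y : there is a φ-path of length k from x to y -/
def FPath {W : Type} (R : NFrame W) (φ : Formula) : ℕ → W → W → Prop
  | 0, x, y => x = y
  | k+1, x, y => ∃ w, R (Formula.boxn k φ) x w ∧ FPath R φ k w y

/-- (m,n)-accessibility for φ -/
def AccFor {W : Type} (R : NFrame W) (m n : ℕ) (φ : Formula) : Prop :=
  ∀ x y, FPath R φ m x y → FPath R φ n x y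

/-- Γ-(m,n)-accessibility -/
def SubAcc {W : Type} (R : NFrame W) (m n : ℕ) (Γ : Finset Formula) : Prop :=
  ∀ φ, Formula.boxn m φ ∈ Γ → AccFor R m n φ

/-- (m,n)-accessibility -/
def Accessible {W : Type} (R : NFrame W) (m n : ℕ) : Prop :=
  ∀ φ, AccFor R m n φ

def ValidM {W : Type} (M : NModel W) (ψ : Formula) : Prop := ∀ w, Sat M w ψ

def ValidF {W : Type} (R : NFrame W) (ψ : Formula) : Prop :=
  ∀ V : W → ℕ → Prop, ValidM ⟨R, V⟩ ψ

/-!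
Soundness is proved by induction on derivations; only the rule Ros^□ needs an idea. Write
`n = k + 2`. If `¬□χ` is valid on every (0,n)-accessible frame, then testing it on a two-world
frame whose world `false` only has edges labelled `□^{n-1}φ` shows that `χ = □^{n-1}θ`. In a
(0,n)-accessible frame the first edge of the `□θ`-cycle through a world `x` is labelled
`□^{n-1}□θ = □^n θ`, so `x` has an `R_{□χ}`-successor; there `¬□χ` holds, hence `¬□□χ` holds at `x`.
-/

namespace Formula

theorem boxn_box (k : ℕ) (φ : Formula) : boxn k (.box φ) = boxn (k + 1) φ := by
  induction k with
  | zero => rfl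
  | succ k ih => exact congrArg box ih

end Formula

section Semantics

variable {W : Type} (M : NModel W)

open Classical in
theorem sat_iff_evalP (w : W) (ρ : Formula) :
    Sat M w ρ ↔ evalP (fun χ => decide (Sat M w χ)) ρ = true := by
  induction ρ with
  | bot => simp [Sat, evalP]
  | var p => exact decide_eq_true_iff.symm
  | neg φ ih => simp [Sat, evalP, ih]
  | or φ ψ ih₁ ih₂ => simp [Sat, evalP, ih₁, ih₂]
  | box φ => simp [evalP]

theorem sat_of_tautology (w : W) {φ : Formula} (h : Tautology φ) : Sat M w φ :=
  (sat_iff_evalP M w φ).mpr (h _)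

variable {M}

theorem sat_of_fPath {φ : Formula} {k : ℕ} {x y : W} (hxy : FPath M.Rel φ k x y)
    (hx : Sat M x (Formula.boxn k φ)) : Sat M y φ := by
  induction k generalizing x with
  | zero => exact hxy ▸ hx
  | succ k ih =>
    obtain ⟨u, hxu, huy⟩ := hxy
    exact ih huy (hx u hxu)

end Semantics

theorem exists_rel_boxn_of_accessible {W : Type} {R : NFrame W} {k : ℕ}
    (hacc : Accessible R 0 (k + 1)) (φ : Formula) (x : W) :
    ∃ w, R (Formula.boxn k φ) x w := by
  obtain ⟨w, hxw, -⟩ := hacc φ x x rfl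
  exact ⟨w, hxw⟩

theorem ValidM.neg_boxn_succ {W : Type} {M : NModel W} {k : ℕ}
    (hacc : Accessible M.Rel 0 (k + 1)) {θ : Formula}
    (h : ValidM M (.neg (Formula.boxn (k + 1) θ))) :
    ValidM M (.neg (Formula.boxn (k + 2) θ)) := by
  intro x hx
  obtain ⟨w, hxw⟩ := exists_rel_boxn_of_accessible hacc (.box θ) x
  rw [Formula.boxn_box] at hxw
  exact h w (hx w hxw)

def boxnFrame (k : ℕ) : NFrame Bool :=
  fun ρ x _ => x = true ∨ ∃ φ, ρ = Formula.boxn (k + 1) φ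

theorem boxnFrame_fPath_true (k : ℕ) (φ : Formula) (j : ℕ) (y : Bool) :
    FPath (boxnFrame k) φ (j + 1) true y := by
  induction j with
  | zero => exact ⟨y, .inl rfl, rfl⟩
  | succ j ih => exact ⟨true, .inl rfl, ih⟩

theorem boxnFrame_accessible (k : ℕ) : Accessible (boxnFrame k) 0 (k + 2) := by
  rintro φ x _ rfl
  exact ⟨true, .inr ⟨φ, rfl⟩, boxnFrame_fPath_true k φ k x⟩

theorem exists_eq_boxn_of_validF_boxnFrame {k : ℕ} {χ : Formula}
    (h : ValidF (boxnFrame k) (.neg (.box χ))) : ∃ θ, χ = Formula.boxn (k + 1) θ := by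
  by_contra hχ
  refine h (fun _ _ => False) false fun w hw => ?_
  rcases hw with hw | ⟨θ, rfl⟩
  · exact absurd hw Bool.false_ne_true
  · exact absurd ⟨θ, rfl⟩ hχ

theorem Prov.validF {k : ℕ} {ψ : Formula} (h : Prov 0 (k + 2) true ψ) :
    ∀ (W : Type) (R : NFrame W), Accessible R 0 (k + 2) → ValidF R ψ := by
  induction h with
  | taut ht => exact fun W R _ V w => sat_of_tautology _ w ht
  | axA φ =>
    intro W R hacc V w
    exact or_iff_not_imp_left.mpr fun hw => sat_of_fPath (hacc φ w w rfl) (not_not.mp hw)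
  | mp _ _ ih₁ ih₂ =>
    intro W R hacc V w
    exact (ih₁ W R hacc V w).resolve_left (not_not.mpr (ih₂ W R hacc V w))
  | nec _ ih => exact fun W R hacc V w w' _ => ih W R hacc V w'
  | ros _ _ ih =>
    obtain ⟨θ, rfl⟩ := exists_eq_boxn_of_validF_boxnFrame (ih Bool _ (boxnFrame_accessible k))
    exact fun W R hacc V => ValidM.neg_boxn_succ hacc (ih W R hacc V)

theorem stmt19 (n : ℕ) (hn : 2 ≤ n) (ψ : Formula) (h : Prov 0 n true ψ) :
    ∀ (W : Type) [Nonempty W] (R : NFrame W),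
      Accessible R 0 n → ValidF R ψ := by
  obtain ⟨k, rfl⟩ : ∃ k, n = k + 2 := ⟨n - 2, by omega⟩
  exact fun W _ R => h.validF W R
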